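/- In ℝ⁴, let C_a = {r·(1,1,1,1) + s·(0,0,0,−1) : r, s ≥ 0} (the cone over the segment from (1,1,1,1) to (0,0,0,−1)) and let C_b = {r·(1,0,0,0) + s·(0,1,0,0) + t·(0,0,1,0) : r, s, t ≥ 0} (the cone over the convex hull of (1,0,0,0), (0,1,0,0), (0,0,1,0)). Then C_a ∩ C_b = {r·(1,1,1,0) : r ≥ 0}, and the lattice point (1,1,1,0) is not contained in Δ₂ = Conv((1,0,0,0),(0,1,0,0),(0,0,1,0),(0,0,0,1),(−1,−1,−1,−1),(1,1,1,1),(0,0,0,−1)); in particular it is not contained in Δ₁ = Conv((1,0,0,0),(0,1,0,0),(0,0,1,0),(0,0,0,1),(−1,−1,−1,−1)) ⊆ Δ₂. -/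
import Mathlib


open Set

/-- The cone over `Conv((1,1,1,1),(0,0,0,-1))` and the cone over
`Conv((1,0,0,0),(0,1,0,0),(0,0,1,0))` intersect in the ray over `(1,1,1,0)`, a lattice
point lying neither in `Δ₂` nor in `Δ₁ ⊆ Δ₂`. -/
theorem new_ray_obstruction
    (Ca Cb : Set (Fin 4 → ℝ))
    (hCa : Ca = {x | ∃ r s : ℝ, 0 ≤ r ∧ 0 ≤ s ∧
      x = r • ![(1:ℝ), 1, 1, 1] + s • ![(0:ℝ), 0, 0, -1]})
    (hCb : Cb = {x | ∃ r s t : ℝ, 0 ≤ r ∧ 0 ≤ s ∧ 0 ≤ t ∧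
      x = r • ![(1:ℝ), 0, 0, 0] + s • ![(0:ℝ), 1, 0, 0] + t • ![(0:ℝ), 0, 1, 0]})
    (Δ₁ Δ₂ : Set (Fin 4 → ℝ))
    (hΔ₁ : Δ₁ = convexHull ℝ
      {![(1:ℝ), 0, 0, 0], ![(0:ℝ), 1, 0, 0], ![(0:ℝ), 0, 1, 0], ![(0:ℝ), 0, 0, 1],
       ![(-1:ℝ), -1, -1, -1]})
    (hΔ₂ : Δ₂ = convexHull ℝ
      {![(1:ℝ), 0, 0, 0], ![(0:ℝ), 1, 0, 0], ![(0:ℝ), 0, 1, 0], ![(0:ℝ), 0, 0, 1],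
       ![(-1:ℝ), -1, -1, -1], ![(1:ℝ), 1, 1, 1], ![(0:ℝ), 0, 0, -1]}) :
    Ca ∩ Cb = {x | ∃ r : ℝ, 0 ≤ r ∧ x = r • ![(1:ℝ), 1, 1, 0]} ∧
    Δ₁ ⊆ Δ₂ ∧
    ![(1:ℝ), 1, 1, 0] ∉ Δ₂ ∧
    ![(1:ℝ), 1, 1, 0] ∉ Δ₁ := by

  have key2 : ![(1:ℝ), 1, 1, 0] ∉ Δ₂ := by
    subst hΔ₂
    intro hmem
    set f : (Fin 4 → ℝ) →ₗ[ℝ] ℝ :=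
      (LinearMap.proj 0 : (Fin 4 → ℝ) →ₗ[ℝ] ℝ) + (LinearMap.proj 1 : (Fin 4 → ℝ) →ₗ[ℝ] ℝ) +
        (LinearMap.proj 2 : (Fin 4 → ℝ) →ₗ[ℝ] ℝ) - (2:ℝ) • (LinearMap.proj 3 : (Fin 4 → ℝ) →ₗ[ℝ] ℝ)
    have hconv : Convex ℝ {x : Fin 4 → ℝ | f x ≤ 2} :=
      convex_halfSpace_le ⟨f.map_add, f.map_smul⟩ 2
    have hsub : convexHull ℝ
        {![(1:ℝ), 0, 0, 0], ![(0:ℝ), 1, 0, 0], ![(0:ℝ), 0, 1, 0], ![(0:ℝ), 0, 0, 1],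
         ![(-1:ℝ), -1, -1, -1], ![(1:ℝ), 1, 1, 1], ![(0:ℝ), 0, 0, -1]} ⊆
        {x : Fin 4 → ℝ | f x ≤ 2} := by
      apply convexHull_min _ hconv
      intro v hv
      simp only [Set.mem_insert_iff, Set.mem_singleton_iff] at hv
      rcases hv with h|h|h|h|h|h|h <;> subst h <;>
        simp [f, LinearMap.proj_apply] <;> norm_num
    have := hsub hmem
    simp [f, LinearMap.proj_apply] at this
    norm_num at this
  have hsub12 : Δ₁ ⊆ Δ₂ := by
    subst hΔ₁; subst hΔ₂
    apply convexHull_mono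
    intro v hv
    simp only [Set.mem_insert_iff, Set.mem_singleton_iff] at hv ⊢
    tauto
  refine ⟨?_, hsub12, key2, fun h => key2 (hsub12 h)⟩
  subst hCa hCb
  ext x
  constructor
  · rintro ⟨⟨r, s, hr, hs, hx⟩, ⟨r', s', t', hr', hs', ht', hx'⟩⟩
    have h3 : x 3 = r - s := by simp [hx, Matrix.cons_val_three]; ring
    have h3' : x 3 = 0 := by simp [hx', Matrix.cons_val_three]
    have hrs : s = r := by linarith [h3.symm.trans h3']
    refine ⟨r, hr, ?_⟩
    subst hrs
    funext i
    fin_cases i <;> simp [hx]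
  · rintro ⟨r, hr, hx⟩
    refine ⟨⟨r, r, hr, hr, ?_⟩, ⟨r, r, r, hr, hr, hr, ?_⟩⟩ <;>
      (subst hx; funext i; fin_cases i <;> simp)
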